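/- Let P be a periodic pattern of length m over {0,…,σ−1}, s = L-head(P) and H = L-root(P), and let Occᵃ⁻(P,T) = {j ∈ R_{s,H} ∩ Occ(P,T) ∩ R⁻ : L-exp(j) > L-exp(P)}. If pend(P) ≤ m, then Occᵃ⁻(P,T) = ∅. Otherwise (i.e., if pend(P) = m+1), it holds Occᵃ⁻(P,T) = {j ∈ R⁻_{s,H} : L-exp(j) > L-exp(P)}. -/

import Mathlib

open scoped Classical

namespace CSA

/-- Character of a 1-indexed string at position `i` (junk value 0 out of range). -/
def idx (S : List ℕ) (i : ℕ) : ℕ := S.getD (i - 1) 0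

/-- Substring `S[i..j)` in the 1-indexed, half-open convention. -/
def sub (S : List ℕ) (i j : ℕ) : List ℕ := (S.drop (i - 1)).take (j - i)

/-- Suffix `S[i..|S|]` (1-indexed). -/
def suf (S : List ℕ) (i : ℕ) : List ℕ := S.drop (i - 1)

/-- Length of the longest common prefix of two strings. -/
def lcp (A B : List ℕ) : ℕ := ((A.zip B).takeWhile fun p => p.1 == p.2).length

/-- `LCE T j₁ j₂` is the length of the longest common prefix of `T[j₁..n]` and `T[j₂..n]`. -/
def LCE (T : List ℕ) (j₁ j₂ : ℕ) : ℕ := lcp (suf T j₁) (suf T j₂)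

/-- `p` is a period of `S`. -/
def IsPeriod (S : List ℕ) (p : ℕ) : Prop :=
  1 ≤ p ∧ p ≤ S.length ∧ ∀ i, i + p < S.length → S.getD i 0 = S.getD (i + p) 0

/-- The shortest period of `S`. -/
noncomputable def per (S : List ℕ) : ℕ := sInf {p | IsPeriod S p}

/-- `R = {i ∈ [1..n−3τ+2] : per(T[i..i+3τ−1)) ≤ τ/3}`. -/
noncomputable def R (T : List ℕ) (τ : ℕ) : Set ℕ :=
  {i | 1 ≤ i ∧ i + 3 * τ ≤ T.length + 2 ∧ 3 * per (sub T i (i + 3 * τ - 1)) ≤ τ}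

/-- `rend(j) = min{j′ ≥ j : j′ ∉ R} + 3τ − 2`. -/
noncomputable def rend (T : List ℕ) (τ j : ℕ) : ℕ :=
  sInf {j' | j ≤ j' ∧ j' ∉ R T τ} + 3 * τ - 2

/-- `L-root(j)`: lexicographically smallest among `{T[j+t..j+t+p) : 0 ≤ t < p}`
where `p = per(T[j..j+3τ−1))`. -/
noncomputable def Lroot (T : List ℕ) (τ j : ℕ) : List ℕ :=
  WithTop.untopD [] ((Finset.range (per (sub T j (j + 3 * τ - 1)))).image fun t =>
      sub T (j + t) (j + t + per (sub T j (j + 3 * τ - 1)))).min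

/-- `L-head(j)`: the (unique) `s ∈ [0..p)` with `T[j+s..j+s+p) = L-root(j)`. -/
noncomputable def Lhead (T : List ℕ) (τ j : ℕ) : ℕ :=
  sInf {s | s < per (sub T j (j + 3 * τ - 1)) ∧
    sub T (j + s) (j + s + per (sub T j (j + 3 * τ - 1))) = Lroot T τ j}

noncomputable def Lexp (T : List ℕ) (τ j : ℕ) : ℕ :=
  (rend T τ j - j - Lhead T τ j) / per (sub T j (j + 3 * τ - 1))

noncomputable def Ltail (T : List ℕ) (τ j : ℕ) : ℕ :=
  (rend T τ j - j - Lhead T τ j) % per (sub T j (j + 3 * τ - 1))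

noncomputable def rendfull (T : List ℕ) (τ j : ℕ) : ℕ := rend T τ j - Ltail T τ j

/-- `type(j) = +1` if `rend(j) ≤ n` and `T[rend(j)] > T[rend(j)−p]`, and `−1` otherwise. -/
noncomputable def typ (T : List ℕ) (τ j : ℕ) : ℤ :=
  if rend T τ j ≤ T.length ∧
      idx T (rend T τ j - per (sub T j (j + 3 * τ - 1))) < idx T (rend T τ j)
    then 1 else -1

noncomputable def Rminus (T : List ℕ) (τ : ℕ) : Set ℕ := {j ∈ R T τ | typ T τ j = -1}

noncomputable def RH (T : List ℕ) (τ : ℕ) (H : List ℕ) : Set ℕ :=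
  {j ∈ R T τ | Lroot T τ j = H}

noncomputable def RsH (T : List ℕ) (τ s : ℕ) (H : List ℕ) : Set ℕ :=
  {j ∈ R T τ | Lroot T τ j = H ∧ Lhead T τ j = s}

noncomputable def RminusH (T : List ℕ) (τ : ℕ) (H : List ℕ) : Set ℕ :=
  Rminus T τ ∩ RH T τ H

noncomputable def RminusSH (T : List ℕ) (τ s : ℕ) (H : List ℕ) : Set ℕ :=
  Rminus T τ ∩ RsH T τ s H

noncomputable def Rprime (T : List ℕ) (τ : ℕ) : Set ℕ := {j ∈ R T τ | j - 1 ∉ R T τ}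

/-- `Occ(P,S)`: the set of (1-indexed) starting positions of occurrences of `P` in `S`. -/
def OccSet (P S : List ℕ) : Set ℕ :=
  {j | 1 ≤ j ∧ j + P.length ≤ S.length + 1 ∧ sub S j (j + P.length) = P}

noncomputable def RangeBeg (P T : List ℕ) : ℕ :=
  Set.ncard {i | 1 ≤ i ∧ i ≤ T.length ∧ suf T i < P}

noncomputable def RangeEnd (P T : List ℕ) : ℕ := RangeBeg P T + (OccSet P T).ncard

/-- `ISA[j]`: the lexicographic rank of the suffix `T[j..n]` among all suffixes of `T`. -/
noncomputable def ISA (T : List ℕ) (j : ℕ) : ℕ :=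
  Set.ncard {j' | 1 ≤ j' ∧ j' ≤ T.length ∧ suf T j' ≤ suf T j}

/-- `succ_S(i) = min{j ∈ S ∪ {n−2τ+2} : j ≥ i}`. -/
noncomputable def succS (T : List ℕ) (τ : ℕ) (Sync : Set ℕ) (i : ℕ) : ℕ :=
  sInf {j | i ≤ j ∧ (j ∈ Sync ∨ j = T.length + 2 - 2 * τ)}

/-- The set `D` of distinguishing prefixes. -/
noncomputable def Dset (T : List ℕ) (τ : ℕ) (Sync : Set ℕ) : Set (List ℕ) :=
  {X | ∃ i, 1 ≤ i ∧ i + 3 * τ ≤ T.length + 2 ∧ i ∉ R T τ ∧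
    X = sub T i (succS T τ Sync i + 2 * τ)}

/-- `T^∞[i] = T[1 + ((i−1) mod n)]` for `i : ℤ`. -/
def tinf (T : List ℕ) (i : ℤ) : ℕ := idx T (((i - 1).emod (T.length : ℤ)).toNat + 1)

/-- `W[i]`: the reverse of `T^∞[s^lex_i − τ .. s^lex_i + 2τ)`. -/
def Wstr (T : List ℕ) (τ : ℕ) (slex : ℕ → ℕ) (i : ℕ) : List ℕ :=
  ((List.range (3 * τ)).map fun k => tinf T ((slex i : ℤ) - (τ : ℤ) + (k : ℤ))).reverse

/- Pattern versions of the `L`-decomposition functions. -/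

noncomputable def perP (τ : ℕ) (P : List ℕ) : ℕ := per (P.take (3 * τ - 1))

/-- A pattern is periodic if `|P| ≥ 3τ−1` and `per(P[1..3τ−1]) ≤ τ/3`. -/
noncomputable def Periodic (τ : ℕ) (P : List ℕ) : Prop :=
  3 * τ - 1 ≤ P.length ∧ 3 * perP τ P ≤ τ

noncomputable def pend (τ : ℕ) (P : List ℕ) : ℕ :=
  1 + perP τ P + lcp P (P.drop (perP τ P))

noncomputable def LrootP (τ : ℕ) (P : List ℕ) : List ℕ :=
  WithTop.untopD [] ((Finset.range (perP τ P)).image fun t => (P.drop t).take (perP τ P)).min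

noncomputable def LheadP (τ : ℕ) (P : List ℕ) : ℕ :=
  sInf {s | s < perP τ P ∧ (P.drop s).take (perP τ P) = LrootP τ P}

noncomputable def LexpP (τ : ℕ) (P : List ℕ) : ℕ :=
  (pend τ P - 1 - LheadP τ P) / perP τ P

noncomputable def LtailP (τ : ℕ) (P : List ℕ) : ℕ :=
  (pend τ P - 1 - LheadP τ P) % perP τ P

noncomputable def pendfullP (τ : ℕ) (P : List ℕ) : ℕ := pend τ P - LtailP τ P

noncomputable def typP (τ : ℕ) (P : List ℕ) : ℤ :=
  if pend τ P ≤ P.length ∧ idx P (pend τ P - perP τ P) < idx P (pend τ P)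
    then 1 else -1

/-- `pow(H)`: the prefix of length `|H|·⌈τ/|H|⌉` of `H^∞`. -/
def powS (τ : ℕ) (H : List ℕ) : List ℕ :=
  (List.replicate ((τ + H.length - 1) / H.length) H).flatten

/-!
Let `p = perP τ P`. A window in `R` has a period `q ≤ τ/3`, so `p + q` is shorter than the
window; hence if `T` is `p`-periodic on all of a window in `R` but its last position `b`, then
`T[b] = T[b-q] = T[b-q-p] = T[b-p]`. Sliding the window along shows that `T[j..rend(j))` is
`p`-periodic for `j ∈ R`, and conversely that a break of the period `p` closes the run.

If `pend(P) ≤ m`, an occurrence of `P` at `j` breaks the period at `j + pend(P) - 1`, so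
`rend(j) ≤ j + pend(P) - 1` and `L-exp(j) ≤ L-exp(P)`. If `pend(P) = m + 1`, `P` is `p`-periodic;
for `j ∈ R_{s,H}` with `L-exp(j) > L-exp(P)` the run of `j` covers `T[j..j+m)`, and this
`p`-periodic string agrees with `P` on the period `[s, s+p)` (both read `H` there), hence
everywhere: `P` occurs at `j`.
-/

theorem lcp_cons (a b : ℕ) (A B : List ℕ) :
    lcp (a :: A) (b :: B) = if a = b then lcp A B + 1 else 0 := by
  by_cases h : a = b <;> simp [lcp, h]

theorem getD_eq_of_lt_lcp : ∀ {A B : List ℕ} {i : ℕ}, i < lcp A B → A.getD i 0 = B.getD i 0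
  | a :: A, b :: B, i, h => by
    rw [lcp_cons] at h
    split_ifs at h with hab
    · cases i with
      | zero => simp [hab]
      | succ i => simpa using getD_eq_of_lt_lcp (A := A) (B := B) (by omega)
    · simp at h
  | [], _, _, h => by simp [lcp] at h
  | _ :: _, [], _, h => by simp [lcp] at h

theorem getD_lcp_ne : ∀ {A B : List ℕ}, lcp A B < A.length → lcp A B < B.length →
    A.getD (lcp A B) 0 ≠ B.getD (lcp A B) 0
  | a :: A, b :: B, hA, hB => by
    by_cases hab : a = b
    · simp only [lcp_cons, if_pos hab, List.length_cons] at hA hB ⊢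
      simpa using getD_lcp_ne (A := A) (B := B) (by omega) (by omega)
    · simp [lcp_cons, hab]
  | [], _, hA, _ => by simp at hA
  | _ :: _, [], _, hB => by simp [lcp] at hB

theorem le_lcp : ∀ {A B : List ℕ} {k : ℕ}, k ≤ A.length → k ≤ B.length →
    (∀ i < k, A.getD i 0 = B.getD i 0) → k ≤ lcp A B
  | _, _, 0, _, _, _ => Nat.zero_le _
  | a :: A, b :: B, k + 1, hA, hB, h => by
    have hab : a = b := by simpa using h 0 (by omega)
    have := le_lcp (A := A) (B := B) (k := k) (by simpa using hA) (by simpa using hB)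
      fun i hi => by simpa using h (i + 1) (by omega)
    rw [lcp_cons, if_pos hab]
    omega
  | [], _, _ + 1, hA, _, _ => by simp at hA
  | _ :: _, [], _ + 1, _, hB, _ => by simp at hB

theorem getD_drop {α : Type*} (l : List α) (d : α) (k i : ℕ) :
    (l.drop k).getD i d = l.getD (k + i) d := by
  simp [List.getD_eq_getElem?_getD, List.getElem?_drop]

theorem getD_take {α : Type*} (l : List α) (d : α) {k i : ℕ} (h : i < k) :
    (l.take k).getD i d = l.getD i d := by
  simp [List.getD_eq_getElem?_getD, h]

-- `DecidableEq α` is not taken from `LinearOrder α`, so that the lemma applies to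
-- `Finset.image` into `List ℕ`, which uses `instDecidableEqList`.
theorem exists_lt_eq_untopD_min {α : Type*} [LinearOrder α] [DecidableEq α] (f : ℕ → α)
    {p : ℕ} (hp : 0 < p) (d : α) :
    ∃ s < p, f s = WithTop.untopD d ((Finset.range p).image f).min := by
  have hne : ((Finset.range p).image f).Nonempty :=
    ⟨f 0, Finset.mem_image_of_mem f (Finset.mem_range.2 hp)⟩
  obtain ⟨s, hs, hfs⟩ := Finset.mem_image.1 (Finset.min'_mem _ hne)
  refine ⟨s, Finset.mem_range.1 hs, ?_⟩
  rw [← Finset.coe_min' hne, WithTop.untopD_coe, hfs]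

def PeriodicOn {α : Type*} (f : ℕ → α) (p a b : ℕ) : Prop :=
  ∀ x, a ≤ x → x + p < b → f x = f (x + p)

namespace PeriodicOn

variable {α : Type*} {f g : ℕ → α} {p a b : ℕ}

theorem mono {a' b' : ℕ} (h : PeriodicOn f p a b) (ha : a ≤ a') (hb : b' ≤ b) :
    PeriodicOn f p a' b' :=
  fun x hx hxp => h x (ha.trans hx) (by omega)

theorem succ (h : PeriodicOn f p a b) (hb : f (b - p) = f b) : PeriodicOn f p a (b + 1) := by
  intro x hax hx
  rcases Nat.lt_or_ge (x + p) b with hlt | hge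
  · exact h x hax hlt
  · rwa [show b - p = x by omega, show b = x + p by omega] at hb

theorem comp_add {c : ℕ} (h : PeriodicOn f p c (c + b)) :
    PeriodicOn (fun i => f (c + i)) p 0 b :=
  fun x _ hx => by simpa [add_assoc] using h (c + x) (by omega) (by omega)

theorem apply_mod (hp : 0 < p) (h : PeriodicOn f p 0 b) : ∀ i < b, f (i % p) = f i := by
  intro i
  induction i using Nat.strong_induction_on with
  | _ i ih =>
    intro hi
    rcases Nat.lt_or_ge i p with hip | hpi
    · rw [Nat.mod_eq_of_lt hip]
    · obtain ⟨k, rfl⟩ := Nat.exists_eq_add_of_le' hpi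
      rw [Nat.add_mod_right, ih k (by omega) (by omega)]
      exact h k k.zero_le hi

theorem eq_of_eq_on_period {s : ℕ} (hf : PeriodicOn f p 0 b) (hg : PeriodicOn g p 0 b)
    (hs : s < p) (hsb : s + p ≤ b) (hfg : ∀ r < p, f (s + r) = g (s + r)) :
    ∀ i < b, f i = g i := by
  intro i hi
  have hp : 0 < p := by omega
  set r := (i + p - s) % p
  have hr : (s + r) % p = i % p := by
    rw [Nat.add_mod_mod, show s + (i + p - s) = i + p by omega, Nat.add_mod_right]
  have hsr : s + r < b := by have := Nat.mod_lt (i + p - s) hp; omega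
  rw [← hf.apply_mod hp i hi, ← hg.apply_mod hp i hi, ← hr, hf.apply_mod hp _ hsr,
    hg.apply_mod hp _ hsr]
  exact hfg r (Nat.mod_lt _ hp)

end PeriodicOn

theorem length_sub (S : List ℕ) (i j : ℕ) :
    (sub S i j).length = min (j - i) (S.length - (i - 1)) := by
  simp [sub]

theorem getD_sub {S : List ℕ} {i j k : ℕ} (hi : 1 ≤ i) (hk : k < j - i) :
    (sub S i j).getD k 0 = idx S (i + k) := by
  simp only [sub, idx, List.getD_eq_getElem?_getD, List.getElem?_take, hk, if_true,
    List.getElem?_drop]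
  congr 2
  omega

theorem isPeriod_per {S : List ℕ} (h : S ≠ []) : IsPeriod S (per S) :=
  Nat.sInf_mem (s := {p | IsPeriod S p})
    ⟨S.length, show IsPeriod S S.length from
      ⟨List.length_pos_iff.2 h, le_rfl, fun _ hi => absurd hi (by omega)⟩⟩

section Runs

variable {T : List ℕ} {τ : ℕ}

theorem periodicOn_window_of_mem_R (hτ : 1 ≤ τ) {w : ℕ} (hw : w ∈ R T τ) :
    1 ≤ per (sub T w (w + 3 * τ - 1)) ∧ 3 * per (sub T w (w + 3 * τ - 1)) ≤ τ ∧
      PeriodicOn (idx T) (per (sub T w (w + 3 * τ - 1))) w (w + 3 * τ - 1) := by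
  obtain ⟨hw1, hwT, hwτ⟩ := hw
  have hlen : (sub T w (w + 3 * τ - 1)).length = 3 * τ - 1 := by rw [length_sub]; omega
  obtain ⟨hq1, -, hq⟩ := isPeriod_per (S := sub T w (w + 3 * τ - 1)) (by grind)
  set q := per (sub T w (w + 3 * τ - 1))
  refine ⟨hq1, hwτ, fun x hwx hx => ?_⟩
  have := hq (x - w) (by omega)
  rwa [getD_sub hw1 (by omega), getD_sub hw1 (by omega), show w + (x - w) = x by omega,
    show w + (x - w + q) = x + q by omega] at this

theorem rend_le {j j' : ℕ} (hjj' : j ≤ j') (hj' : j' ∉ R T τ) : rend T τ j ≤ j' + 3 * τ - 2 := by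
  have : sInf {j'' | j ≤ j'' ∧ j'' ∉ R T τ} ≤ j' := Nat.sInf_le ⟨hjj', hj'⟩
  unfold rend
  omega

theorem rend_le_length_add_one {j : ℕ} (hj : j ∈ R T τ) : rend T τ j ≤ T.length + 1 := by
  have hjT := hj.2.1
  have := rend_le (T := T) (τ := τ) (j := j) (j' := T.length + 3 - 3 * τ) (by omega)
    (fun h => by have := h.2.1; omega)
  omega

theorem mem_R_of_lt_rend {j w : ℕ} (hjw : j ≤ w) (hw : w + 3 * τ - 2 < rend T τ j) :
    w ∈ R T τ := by
  by_contra h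
  exact absurd (rend_le hjw h) (by omega)

theorem idx_sub_eq_of_mem_R (hτ : 1 ≤ τ) {w p : ℕ} (hw : w ∈ R T τ) (hp : 3 * p ≤ τ)
    (h : PeriodicOn (idx T) p w (w + 3 * τ - 2)) :
    idx T (w + 3 * τ - 2 - p) = idx T (w + 3 * τ - 2) := by
  obtain ⟨hq1, hqτ, hq⟩ := periodicOn_window_of_mem_R hτ hw
  set q := per (sub T w (w + 3 * τ - 1))
  set x := w + 3 * τ - 2 - p
  have h1 := hq (x - q) (by omega) (by omega)
  have h2 := h (x - q) (by omega) (by omega)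
  have h3 := hq (x - q + p) (by omega) (by omega)
  rw [show x - q + q = x by omega] at h1
  rw [show x - q + p + q = w + 3 * τ - 2 by omega] at h3
  rw [← h1, h2, h3]

theorem periodicOn_rend (hτ : 1 ≤ τ) {j : ℕ} (hj : j ∈ R T τ) :
    PeriodicOn (idx T) (per (sub T j (j + 3 * τ - 1))) j (rend T τ j) := by
  obtain ⟨hp1, hpτ, hwin⟩ := periodicOn_window_of_mem_R hτ hj
  rcases le_total (rend T τ j) (j + 3 * τ - 1) with hle | hlt
  · exact hwin.mono le_rfl hle
  suffices ∀ b, j + 3 * τ - 1 ≤ b → b ≤ rend T τ j →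
      PeriodicOn (idx T) (per (sub T j (j + 3 * τ - 1))) j b from this _ hlt le_rfl
  intro b hb
  induction b, hb using Nat.le_induction with
  | base => exact fun _ => hwin
  | succ b hb ih =>
    intro hbr
    have ih := ih (by omega)
    have hw : b + 2 - 3 * τ ∈ R T τ := mem_R_of_lt_rend (j := j) (by omega) (by omega)
    have := idx_sub_eq_of_mem_R hτ hw hpτ ((ih).mono (by omega) (by omega))
    exact ih.succ (by rwa [show b + 2 - 3 * τ + 3 * τ - 2 = b by omega] at this)

end Runs

section Pattern

variable {τ : ℕ} {P : List ℕ}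

theorem periodicOn_perP (hτ : 1 ≤ τ) (hP : 3 * τ - 1 ≤ P.length) :
    1 ≤ perP τ P ∧ PeriodicOn (P.getD · 0) (perP τ P) 0 (3 * τ - 1) := by
  have hlen : (P.take (3 * τ - 1)).length = 3 * τ - 1 := by simp; omega
  obtain ⟨hp1, -, hp⟩ := isPeriod_per (S := P.take (3 * τ - 1)) (by grind)
  refine ⟨hp1, fun i _ hi => ?_⟩
  unfold perP at hi ⊢
  have := hp i (by omega)
  rwa [getD_take _ _ (by omega), getD_take _ _ (by omega)] at this

theorem periodicOn_pend : PeriodicOn (P.getD · 0) (perP τ P) 0 (pend τ P - 1) := by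
  intro i _ hi
  have := getD_eq_of_lt_lcp (A := P) (B := P.drop (perP τ P)) (i := i)
    (by unfold pend at hi; omega)
  rwa [getD_drop, add_comm (perP τ P)] at this

theorem getD_ne_of_pend_le (h : pend τ P ≤ P.length) :
    P.getD (pend τ P - 1 - perP τ P) 0 ≠ P.getD (pend τ P - 1) 0 := by
  unfold pend at h ⊢
  have := getD_lcp_ne (A := P) (B := P.drop (perP τ P)) (by omega) (by simp; omega)
  rw [getD_drop] at this
  convert this using 2 <;> omega

theorem three_mul_le_pend (hτ : 1 ≤ τ) (hP : Periodic τ P) : 3 * τ ≤ pend τ P := by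
  obtain ⟨hp1, hp⟩ := periodicOn_perP hτ hP.1
  obtain ⟨hPτ, hpτ⟩ := hP
  have := le_lcp (A := P) (B := P.drop (perP τ P)) (k := 3 * τ - 1 - perP τ P)
    (by omega) (by simp; omega) fun i hi => by
      rw [getD_drop, add_comm]
      exact hp i (Nat.zero_le _) (by omega)
  unfold pend
  omega

theorem LheadP_spec (hτ : 1 ≤ τ) (hP : 3 * τ - 1 ≤ P.length) :
    LheadP τ P < perP τ P ∧ (P.drop (LheadP τ P)).take (perP τ P) = LrootP τ P :=
  Nat.sInf_mem (exists_lt_eq_untopD_min (fun t => (P.drop t).take (perP τ P))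
    (periodicOn_perP hτ hP).1 [])

theorem getD_LrootP (hτ : 1 ≤ τ) (hP : 3 * τ - 1 ≤ P.length) {r : ℕ} (hr : r < perP τ P) :
    (LrootP τ P).getD r 0 = P.getD (LheadP τ P + r) 0 := by
  rw [← (LheadP_spec hτ hP).2, getD_take _ _ hr, getD_drop]

theorem length_LrootP (hτ : 1 ≤ τ) (hP : Periodic τ P) : (LrootP τ P).length = perP τ P := by
  obtain ⟨hs, hroot⟩ := LheadP_spec hτ hP.1
  rw [← hroot]
  simp only [List.length_take, List.length_drop]
  have := hP.1
  have := hP.2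
  omega

end Pattern

section Occurrence

variable {T P : List ℕ} {j : ℕ}

theorem idx_add_of_mem_OccSet (hj : j ∈ OccSet P T) {i : ℕ} (hi : i < P.length) :
    idx T (j + i) = P.getD i 0 := by
  obtain ⟨hj1, -, hsub⟩ := hj
  have := getD_sub (S := T) (j := j + P.length) (k := i) hj1 (by omega)
  rwa [hsub, eq_comm] at this

theorem per_window_eq_perP_of_mem_OccSet {τ : ℕ} (hj : j ∈ OccSet P T) (hP : 3 * τ - 1 ≤ P.length) :
    per (sub T j (j + 3 * τ - 1)) = perP τ P := by
  obtain ⟨-, -, hsub⟩ := hj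
  unfold perP
  rw [← hsub, sub, sub, List.take_take]
  congr 2
  omega

theorem mem_OccSet_of_forall_idx (hj1 : 1 ≤ j) (hjT : j + P.length ≤ T.length + 1)
    (h : ∀ i < P.length, idx T (j + i) = P.getD i 0) : j ∈ OccSet P T := by
  refine ⟨hj1, hjT, List.ext_getElem (by rw [length_sub]; omega) fun i hi hi' => ?_⟩
  rw [← List.getD_eq_getElem _ 0 hi, getD_sub hj1 (by omega), h i hi', List.getD_eq_getElem]

end Occurrence

section Decomposition

variable {T P : List ℕ} {τ j : ℕ}

theorem Lhead_spec (hτ : 1 ≤ τ) (hj : j ∈ R T τ) :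
    Lhead T τ j < per (sub T j (j + 3 * τ - 1)) ∧
      sub T (j + Lhead T τ j) (j + Lhead T τ j + per (sub T j (j + 3 * τ - 1))) = Lroot T τ j :=
  Nat.sInf_mem (exists_lt_eq_untopD_min
    (fun t => sub T (j + t) (j + t + per (sub T j (j + 3 * τ - 1))))
    (periodicOn_window_of_mem_R hτ hj).1 [])

theorem length_Lroot (hτ : 1 ≤ τ) (hj : j ∈ R T τ) :
    (Lroot T τ j).length = per (sub T j (j + 3 * τ - 1)) := by
  obtain ⟨hs, hroot⟩ := Lhead_spec hτ hj
  obtain ⟨hp1, hpτ, -⟩ := periodicOn_window_of_mem_R hτ hj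
  have := hj.2.1
  rw [← hroot, length_sub]
  omega

theorem getD_Lroot (hτ : 1 ≤ τ) (hj : j ∈ R T τ) {r : ℕ}
    (hr : r < per (sub T j (j + 3 * τ - 1))) :
    (Lroot T τ j).getD r 0 = idx T (j + Lhead T τ j + r) := by
  rw [← (Lhead_spec hτ hj).2, getD_sub (by have := hj.1; omega) (by omega)]

theorem Lexp_le_LexpP (hper : per (sub T j (j + 3 * τ - 1)) = perP τ P)
    (hhead : Lhead T τ j = LheadP τ P) (hrend : rend T τ j ≤ j + pend τ P - 1) :
    Lexp T τ j ≤ LexpP τ P := by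
  unfold Lexp LexpP
  rw [hper, hhead]
  exact Nat.div_le_div_right (by omega)

theorem rend_le_of_mem_OccSet (hτ : 1 ≤ τ) (hP : Periodic τ P) (hpend : pend τ P ≤ P.length)
    (hj : j ∈ OccSet P T) : rend T τ j ≤ j + pend τ P - 1 := by
  have h3 := three_mul_le_pend hτ hP
  have hpτ := hP.2
  have hT : PeriodicOn (idx T) (perP τ P) j (j + pend τ P - 1) := fun x hjx hx => by
    have : P.getD (x - j) 0 = P.getD (x - j + perP τ P) 0 :=
      periodicOn_pend (x - j) (Nat.zero_le _) (by omega)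
    rwa [← idx_add_of_mem_OccSet hj (by omega), ← idx_add_of_mem_OccSet hj (by omega),
      show j + (x - j) = x by omega, show j + (x - j + perP τ P) = x + perP τ P by omega] at this
  have hw : j + pend τ P + 1 - 3 * τ ∉ R T τ := fun hw => by
    have := idx_sub_eq_of_mem_R hτ hw hpτ (hT.mono (by omega) (by omega))
    rw [show j + pend τ P + 1 - 3 * τ + 3 * τ - 2 - perP τ P = j + (pend τ P - 1 - perP τ P) by
        omega, show j + pend τ P + 1 - 3 * τ + 3 * τ - 2 = j + (pend τ P - 1) by omega,
      idx_add_of_mem_OccSet hj (by omega), idx_add_of_mem_OccSet hj (by omega)] at this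
    exact getD_ne_of_pend_le hpend this
  have := rend_le (T := T) (j := j) (by omega) hw
  omega

theorem mem_OccSet_of_LexpP_lt_Lexp (hτ : 1 ≤ τ) (hP : Periodic τ P)
    (hpend : pend τ P = P.length + 1) (hj : j ∈ RsH T τ (LheadP τ P) (LrootP τ P))
    (hlt : LexpP τ P < Lexp T τ j) : j ∈ OccSet P T := by
  obtain ⟨hjR, hroot, hhead⟩ := hj
  obtain ⟨hPτ, hpτ⟩ := hP
  have hper : per (sub T j (j + 3 * τ - 1)) = perP τ P := by
    rw [← length_Lroot hτ hjR, hroot, length_LrootP hτ ⟨hPτ, hpτ⟩]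
  have hrend : j + P.length < rend T τ j := by
    by_contra! h
    exact (Lexp_le_LexpP hper hhead (by omega)).not_gt hlt
  have hT : PeriodicOn (fun i => idx T (j + i)) (perP τ P) 0 P.length :=
    ((hper ▸ periodicOn_rend hτ hjR).mono le_rfl hrend.le).comp_add
  have hP : PeriodicOn (P.getD · 0) (perP τ P) 0 P.length := by
    simpa [hpend] using periodicOn_pend (τ := τ) (P := P)
  have hagree (r : ℕ) (hr : r < perP τ P) :
      idx T (j + (LheadP τ P + r)) = P.getD (LheadP τ P + r) 0 := by
    rw [← add_assoc, ← hhead, ← getD_Lroot hτ hjR (by omega), hroot, hhead,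
      getD_LrootP hτ hPτ hr]
  have hs := (LheadP_spec hτ hPτ).1
  have hjT := rend_le_length_add_one hjR
  exact mem_OccSet_of_forall_idx hjR.1 (by omega)
    (hT.eq_of_eq_on_period hP hs (by omega) hagree)

end Decomposition

theorem statement_14_general
    (τ : ℕ) (T : List ℕ)
    (hτ : 1 ≤ τ)
    (P : List ℕ) (m : ℕ) (hm : P.length = m)
    (hperiodic : Periodic τ P)
    (s : ℕ) (hs : s = LheadP τ P) (H : List ℕ) (hH : H = LrootP τ P)
    (OccAm : Set ℕ)
    (hOccAm : OccAm = {j | j ∈ RsH T τ s H ∩ OccSet P T ∩ Rminus T τ ∧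
      LexpP τ P < Lexp T τ j}) :
    (pend τ P ≤ m → OccAm = ∅) ∧
    (pend τ P = m + 1 →
      OccAm = {j | j ∈ RminusSH T τ s H ∧ LexpP τ P < Lexp T τ j}) := by
  subst hm hs hH hOccAm
  refine ⟨fun hpend => ?_, fun hpend => ?_⟩
  · exact Set.eq_empty_of_forall_notMem fun j ⟨⟨⟨⟨_, _, hhead⟩, hocc⟩, _⟩, hlt⟩ =>
      (Lexp_le_LexpP (per_window_eq_perP_of_mem_OccSet hocc hperiodic.1) hhead
        (rend_le_of_mem_OccSet hτ hperiodic hpend hocc)).not_gt hlt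
  · ext j
    constructor
    · rintro ⟨⟨⟨hjs, -⟩, hjm⟩, hlt⟩
      exact ⟨⟨hjm, hjs⟩, hlt⟩
    · rintro ⟨⟨hjm, hjs⟩, hlt⟩
      exact ⟨⟨⟨hjs, mem_OccSet_of_LexpP_lt_Lexp hτ hperiodic hpend hjs hlt⟩, hjm⟩, hlt⟩

/-- Lemma: characterization of `Occᵃ⁻(P,T)`. -/
theorem statement_14
    (σ n τ : ℕ) (T : List ℕ)
    (hσ : 2 ≤ σ) (hn : 2 ≤ n) (hτ : 1 ≤ τ)
    (hlen : T.length = n) (halph : ∀ c ∈ T, c < σ)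
    (hlast : idx T n = 0) (huniq : ∀ i, 1 ≤ i → i < n → idx T i ≠ 0)
    (P : List ℕ) (m : ℕ) (hm : P.length = m) (halphP : ∀ c ∈ P, c < σ)
    (hperiodic : Periodic τ P)
    (s : ℕ) (hs : s = LheadP τ P) (H : List ℕ) (hH : H = LrootP τ P)
    (OccAm : Set ℕ)
    (hOccAm : OccAm = {j | j ∈ RsH T τ s H ∩ OccSet P T ∩ Rminus T τ ∧
      LexpP τ P < Lexp T τ j}) :
    (pend τ P ≤ m → OccAm = ∅) ∧
    (pend τ P = m + 1 →
      OccAm = {j | j ∈ RminusSH T τ s H ∧ LexpP τ P < Lexp T τ j}) :=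
  statement_14_general τ T hτ P m hm hperiodic s hs H hH OccAm hOccAm
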